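/- For a real random variable Y with median μ and density f continuous at μ, the remainder R(y,t) = |y-(μ+t)| - |y-μ| + t·(I{y>μ} - I{y≤μ}) satisfies E[R(Y,t)²] = (4/3) f(μ) |t|³ + o(|t|³) as t → 0. -/

import Mathlib

/-!
On the interval `Ι μ (μ + t)` the remainder equals `±2 (|t| - |y - μ|)`, and it vanishes off it,
so `E[R(Y,t)²] = 4 ∫_{Ι μ (μ + t)} f(y) (|t| - |y - μ|)² dy`. The kernel `(|t| - |y - μ|)²` has
integral `|t|³/3` over that interval, on which `|y - μ| ≤ |t|`; continuity of `f` at `μ` therefore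
replaces `f(y)` by `f(μ)` at the cost of `o(|t|³)`.
-/

open MeasureTheory Filter Asymptotics Set Topology
open scoped Interval

noncomputable def medianRemainder (μ y t : ℝ) : ℝ :=
  |y - (μ + t)| - |y - μ| + t * ((if μ < y then 1 else 0) - (if y ≤ μ then 1 else 0))

theorem medianRemainder_sq (μ y t : ℝ) :
    medianRemainder μ y t ^ 2 = (Ι μ (μ + t)).indicator (fun y => 4 * (|t| - |y - μ|) ^ 2) y := by
  unfold medianRemainder
  by_cases hmem : y ∈ Ι μ (μ + t)
  · rw [indicator_of_mem hmem]
    rcases mem_uIoc.1 hmem with ⟨hlo, hhi⟩ | ⟨hlo, hhi⟩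
    · rw [if_pos hlo, if_neg hlo.not_ge, abs_of_nonpos (by linarith), abs_of_pos (by linarith),
        abs_of_pos (by linarith : 0 < t)]
      ring
    · rw [if_neg hhi.not_gt, if_pos hhi, abs_of_pos (by linarith), abs_of_nonpos (by linarith),
        abs_of_neg (by linarith : t < 0)]
      ring
  · rw [indicator_of_notMem hmem, sq_eq_zero_iff]
    simp only [mem_uIoc, not_or, not_and_or, not_lt, not_le] at hmem
    rcases le_or_gt y μ with h | h
    · rw [if_neg h.not_gt, if_pos h, abs_of_nonpos (by grind), abs_of_nonpos (by linarith)]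
      ring
    · rw [if_pos h, if_neg h.not_ge, abs_of_pos (by grind), abs_of_pos (by linarith)]
      ring

theorem abs_sub_le_abs_of_mem_uIoc {μ t y : ℝ} (hy : y ∈ Ι μ (μ + t)) : |y - μ| ≤ |t| := by
  simpa using abs_sub_left_of_mem_uIcc (uIoc_subset_uIcc hy)

theorem integral_uIoc_sq_abs_sub_abs (μ t : ℝ) :
    ∫ y in Ι μ (μ + t), (|t| - |y - μ|) ^ 2 = |t| ^ 3 / 3 := by
  rcases le_total 0 t with ht | ht
  · rw [uIoc_of_le (by linarith), ← intervalIntegral.integral_of_le (by linarith)]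
    calc ∫ y in μ..μ + t, (|t| - |y - μ|) ^ 2 = ∫ y in μ..μ + t, (μ + t - y) ^ 2 := by
          refine intervalIntegral.integral_congr fun y hy => ?_
          rw [uIcc_of_le (by linarith)] at hy
          rw [abs_of_nonneg ht, abs_of_nonneg (by linarith [hy.1])]
          ring
      _ = |t| ^ 3 / 3 := by
          rw [intervalIntegral.integral_comp_sub_left (fun x => x ^ 2), integral_pow,
            abs_of_nonneg ht]
          ring
  · rw [uIoc_of_ge (by linarith), ← intervalIntegral.integral_of_le (by linarith)]
    calc ∫ y in μ + t..μ, (|t| - |y - μ|) ^ 2 = ∫ y in μ + t..μ, (y - (μ + t)) ^ 2 := by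
          refine intervalIntegral.integral_congr fun y hy => ?_
          rw [uIcc_of_le (by linarith)] at hy
          rw [abs_of_nonpos ht, abs_of_nonpos (by linarith [hy.2])]
          ring
      _ = |t| ^ 3 / 3 := by
          rw [intervalIntegral.integral_comp_sub_right (fun x => x ^ 2), integral_pow,
            abs_of_nonpos ht]
          ring

theorem isLittleO_integral_uIoc_mul_sq_abs_sub_abs {f : ℝ → ℝ} {μ : ℝ} (hf : LocallyIntegrable f)
    (hfμ : ContinuousAt f μ) :
    (fun t => (∫ y in Ι μ (μ + t), f y * (|t| - |y - μ|) ^ 2) - f μ * (|t| ^ 3 / 3))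
      =o[𝓝 0] fun t => |t| ^ 3 := by
  rw [isLittleO_iff]
  intro c hc
  obtain ⟨δ, hδ, hfδ⟩ := Metric.continuousAt_iff.1 hfμ (3 * c) (by positivity)
  filter_upwards [Metric.ball_mem_nhds 0 hδ] with t ht
  rw [mem_ball_zero_iff, Real.norm_eq_abs] at ht
  have hK : IntegrableOn (fun y => (|t| - |y - μ|) ^ 2) (Ι μ (μ + t)) :=
    (by fun_prop : Continuous fun y => (|t| - |y - μ|) ^ 2).integrableOn_uIoc
  have hfK : IntegrableOn (fun y => f y * (|t| - |y - μ|) ^ 2) (Ι μ (μ + t)) :=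
    ((hf.integrableOn_isCompact isCompact_uIcc).mul_continuousOn
      (by fun_prop : Continuous fun y => (|t| - |y - μ|) ^ 2).continuousOn isCompact_uIcc).mono_set
      uIoc_subset_uIcc
  have hclose : ∀ y ∈ Ι μ (μ + t), |f y - f μ| ≤ 3 * c := fun y hy =>
    (hfδ ((abs_sub_le_abs_of_mem_uIoc hy).trans_lt ht)).le
  calc ‖(∫ y in Ι μ (μ + t), f y * (|t| - |y - μ|) ^ 2) - f μ * (|t| ^ 3 / 3)‖
      = ‖∫ y in Ι μ (μ + t), (f y - f μ) * (|t| - |y - μ|) ^ 2‖ := by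
        rw [← integral_uIoc_sq_abs_sub_abs μ t, ← integral_const_mul, ← integral_sub hfK
          (hK.const_mul _)]
        simp only [sub_mul]
    _ ≤ ∫ y in Ι μ (μ + t), 3 * c * (|t| - |y - μ|) ^ 2 := by
        refine norm_integral_le_of_norm_le (hK.const_mul _)
          ((ae_restrict_iff' measurableSet_uIoc).2 (Eventually.of_forall fun y hy => ?_))
        rw [norm_mul, Real.norm_eq_abs, Real.norm_of_nonneg (sq_nonneg _)]
        exact mul_le_mul_of_nonneg_right (hclose y hy) (sq_nonneg _)
    _ = c * ‖|t| ^ 3‖ := by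
        rw [integral_const_mul, integral_uIoc_sq_abs_sub_abs, Real.norm_of_nonneg (by positivity)]
        ring

section Density

variable {Ω α : Type*} [MeasurableSpace Ω] [MeasurableSpace α] {ℙ : Measure Ω} {ν : Measure α}
  {Y : Ω → α} {f : α → ℝ}

theorem integrable_of_map_eq_withDensity [IsFiniteMeasure ℙ]
    (hf_meas : AEStronglyMeasurable f ν) (hf_nonneg : 0 ≤ᵐ[ν] f)
    (hdens : ℙ.map Y = ν.withDensity fun y => ENNReal.ofReal (f y)) :
    Integrable f ν := by
  rw [← lintegral_ofReal_ne_top_iff_integrable hf_meas hf_nonneg, ← setLIntegral_univ,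
    ← withDensity_apply _ MeasurableSet.univ, ← hdens]
  exact measure_ne_top _ _

theorem integral_comp_eq_integral_mul_of_map_eq_withDensity {g : α → ℝ} (hY : AEMeasurable Y ℙ)
    (hf_meas : Measurable f) (hf_nonneg : 0 ≤ᵐ[ν] f)
    (hdens : ℙ.map Y = ν.withDensity fun y => ENNReal.ofReal (f y)) (hg : Measurable g) :
    ∫ ω, g (Y ω) ∂ℙ = ∫ y, f y * g y ∂ν := by
  rw [← integral_map hY hg.aestronglyMeasurable, hdens,
    integral_withDensity_eq_integral_toReal_smul hf_meas.ennreal_ofReal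
      (ae_of_all _ fun _ => ENNReal.ofReal_lt_top)]
  refine integral_congr_ae ?_
  filter_upwards [hf_nonneg] with y hy
  rw [ENNReal.toReal_ofReal hy, smul_eq_mul]

end Density

theorem median_remainder_second_moment_general
    {Ω : Type*} [MeasurableSpace Ω] (ℙ : Measure Ω) [IsProbabilityMeasure ℙ]
    (Y : Ω → ℝ) (hY : Measurable Y)
    (f : ℝ → ℝ) (hf_nonneg : ∀ y, 0 ≤ f y) (hf_meas : Measurable f)
    (hdens : Measure.map Y ℙ = volume.withDensity (fun y => ENNReal.ofReal (f y)))
    (μ : ℝ)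
    (hf_cont : ContinuousAt f μ)
    (R : ℝ → ℝ → ℝ)
    (hR : ∀ y t, R y t = |y - (μ + t)| - |y - μ|
        + t * ((if μ < y then (1:ℝ) else 0) - (if y ≤ μ then (1:ℝ) else 0))) :
    (fun t => (∫ ω, (R (Y ω) t) ^ 2 ∂ℙ) - (4/3) * f μ * |t| ^ 3) =o[nhds (0:ℝ)] fun t => |t| ^ 3 := by
  have hf_int : Integrable f :=
    integrable_of_map_eq_withDensity hf_meas.aestronglyMeasurable (ae_of_all _ hf_nonneg) hdens
  have hmoment (t : ℝ) : ∫ ω, R (Y ω) t ^ 2 ∂ℙ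
      = 4 * ∫ y in Ι μ (μ + t), f y * (|t| - |y - μ|) ^ 2 := by
    simp only [show ∀ y, R y t = medianRemainder μ y t from fun y => hR y t, medianRemainder_sq]
    rw [integral_comp_eq_integral_mul_of_map_eq_withDensity hY.aemeasurable hf_meas
      (ae_of_all _ hf_nonneg) hdens ((by fun_prop : Measurable _).indicator measurableSet_uIoc),
      ← integral_const_mul, ← integral_indicator measurableSet_uIoc]
    simp only [← indicator_mul_right, mul_left_comm]
  have hdiff : (fun t => (∫ ω, R (Y ω) t ^ 2 ∂ℙ) - 4 / 3 * f μ * |t| ^ 3)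
      = fun t => 4 * ((∫ y in Ι μ (μ + t), f y * (|t| - |y - μ|) ^ 2) - f μ * (|t| ^ 3 / 3)) := by
    ext t
    rw [hmoment]
    ring
  rw [hdiff]
  exact (isLittleO_integral_uIoc_mul_sq_abs_sub_abs hf_int.locallyIntegrable hf_cont).const_mul_left
    4

/-- Section 3A of Hjort–Pollard: for `Y` with density `f` continuous and
positive at its median `μ`, the remainder
`R(y,t) = |y-(μ+t)| - |y-μ| + t(I{y>μ} - I{y≤μ})` satisfies
`E[R(Y,t)²] = (4/3) f(μ) |t|³ + o(|t|³)` as `t → 0`. -/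
theorem median_remainder_second_moment
    {Ω : Type*} [MeasurableSpace Ω] (ℙ : Measure Ω) [IsProbabilityMeasure ℙ]
    (Y : Ω → ℝ) (hY : Measurable Y)
    (f : ℝ → ℝ) (hf_nonneg : ∀ y, 0 ≤ f y) (hf_meas : Measurable f)
    (hdens : Measure.map Y ℙ = volume.withDensity (fun y => ENNReal.ofReal (f y)))
    (μ : ℝ)
    (hmed : ℙ {ω | Y ω ≤ μ} = 1/2)
    (hf_cont : ContinuousAt f μ) (hf_pos : 0 < f μ)
    (R : ℝ → ℝ → ℝ)
    (hR : ∀ y t, R y t = |y - (μ + t)| - |y - μ|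
        + t * ((if μ < y then (1:ℝ) else 0) - (if y ≤ μ then (1:ℝ) else 0))) :
    (fun t => (∫ ω, (R (Y ω) t) ^ 2 ∂ℙ) - (4/3) * f μ * |t| ^ 3) =o[nhds (0:ℝ)] fun t => |t| ^ 3 :=
  median_remainder_second_moment_general ℙ Y hY f hf_nonneg hf_meas hdens μ hf_cont R hR
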